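/- arXiv:1712.03906 — 2 statements merged into one kernel-verified Lean document; each statement's English description precedes it below -/
import Mathlib

section
/- Let X be a locally compact Hausdorff space. The collection of countable subsets of X that are closed and discrete in X forms a P-ideal if and only if the point at infinity of the one-point compactification of X is an α₁-point. -/
/-!
A closed discrete subset of a locally compact Hausdorff space is exactly one meeting every
compact set in a finite set, and a sequence converges to `∞` in the one-point compactification
exactly when it visits each compact set only finitely often. Hence the trace on `X` of a
sequence converging to `∞` is countable closed discrete, and conversely every countable closed
discrete set is enumerated, with finite fibres, by a sequence converging to `∞`. Through this
dictionary a `⊆*`-bound for countably many countable closed discrete sets is the same as a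
sequence converging to `∞` that almost contains countably many given ones.
-/

open Filter Topology Set

/-- `x` is an α₁-point: for every countable family of sequences converging to `x`
there is a single sequence converging to `x` whose range almost contains the range
of each member of the family. -/
def IsAlphaOnePoint {X : Type*} [TopologicalSpace X] (x : X) : Prop :=
  ∀ σ : ℕ → ℕ → X, (∀ n, Tendsto (σ n) atTop (𝓝 x)) →
    ∃ τ : ℕ → X, Tendsto τ atTop (𝓝 x) ∧ ∀ n, (Set.range (σ n) \ Set.range τ).Finite

/-- `P` is a P-ideal of countable sets: an ideal of countable sets such that every
countable subfamily has a `⊆*`-upper bound in `P`. -/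
def IsPIdeal {X : Type*} (P : Set (Set X)) : Prop :=
  (∀ A ∈ P, A.Countable) ∧
  (∀ A ∈ P, ∀ B ⊆ A, B ∈ P) ∧
  (∀ A ∈ P, ∀ B ∈ P, A ∪ B ∈ P) ∧
  (∀ Q ⊆ P, Q.Countable → ∃ A ∈ P, ∀ B ∈ Q, (B \ A).Finite)

open OnePoint

def FiniteOnCompacts {X : Type*} [TopologicalSpace X] (A : Set X) : Prop :=
  ∀ K, IsCompact K → (A ∩ K).Finite

section FiniteOnCompacts

variable {X : Type*} [TopologicalSpace X]

lemma FiniteOnCompacts.mono {A B : Set X} (hA : FiniteOnCompacts A) (hBA : B ⊆ A) :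
    FiniteOnCompacts B :=
  fun K hK => (hA K hK).subset (inter_subset_inter_left K hBA)

lemma FiniteOnCompacts.union {A B : Set X} (hA : FiniteOnCompacts A) (hB : FiniteOnCompacts B) :
    FiniteOnCompacts (A ∪ B) := fun K hK => by
  rw [union_inter_distrib_right]
  exact (hA K hK).union (hB K hK)

lemma finiteOnCompacts_empty : FiniteOnCompacts (∅ : Set X) :=
  fun K _ => by simp

lemma isClosed_and_discreteTopology_iff_finiteOnCompacts [T1Space X]
    [WeaklyLocallyCompactSpace X] {S : Set X} :
    IsClosed S ∧ DiscreteTopology S ↔ FiniteOnCompacts S := by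
  constructor
  · rintro ⟨hS, hdisc⟩ K hK
    have : DiscreteTopology (S ∩ K : Set X) := hdisc.of_subset inter_subset_left
    exact (hK.inter_left hS).finite (isDiscrete_iff_discreteTopology.mpr ‹_›)
  · intro h
    rw [← isDiscrete_iff_discreteTopology, isClosed_and_discrete_iff]
    intro x
    obtain ⟨K, hK, hKx⟩ := exists_compact_mem_nhds x
    have hF : ((S ∩ K) \ {x})ᶜ ∈ 𝓝 x := (h K hK).sdiff.isClosed.compl_mem_nhds (by simp)
    rw [disjoint_principal_right]
    filter_upwards [inter_mem_nhdsWithin {x}ᶜ (inter_mem hKx hF)]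
    rintro y ⟨hyx, hyK, hyF⟩ hyS
    exact hyF ⟨⟨hyS, hyK⟩, hyx⟩

end FiniteOnCompacts

namespace OnePoint

variable {X : Type*} [TopologicalSpace X]

lemma tendsto_cofinite_nhds_infty_iff {α : Type*} {u : α → OnePoint X} :
    Tendsto u cofinite (𝓝 ∞) ↔
      ∀ K : Set X, IsClosed K → IsCompact K → (u ⁻¹' ((↑) '' K)).Finite := by
  simp only [hasBasis_nhds_infty.tendsto_right_iff, eventually_cofinite, and_imp,
    ← compl_image_coe, mem_compl_iff, not_not]
  rfl

lemma finiteOnCompacts_preimage_range_of_tendsto [T2Space X] {α : Type*} {u : α → OnePoint X}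
    (hu : Tendsto u cofinite (𝓝 ∞)) : FiniteOnCompacts ((↑) ⁻¹' range u : Set X) := by
  intro K hK
  have hfin := ((tendsto_cofinite_nhds_infty_iff.mp hu K hK.isClosed hK).image u).preimage
    coe_injective.injOn
  rwa [image_preimage_eq_inter_range, preimage_inter, preimage_image_eq _ coe_injective,
    inter_comm] at hfin

/-- The sequence runs through `A` along an injection `A → ℕ` and is `∞` off its range. -/
lemma exists_tendsto_infty_image_subset_range {A : Set X} (hA : A.Countable)
    (hfin : FiniteOnCompacts A) :
    ∃ τ : ℕ → OnePoint X, Tendsto τ atTop (𝓝 ∞) ∧ (↑) '' A ⊆ range τ := by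
  have := hA.to_subtype
  obtain ⟨e, he⟩ := Countable.exists_injective_nat A
  refine ⟨Function.extend e (fun a => ((a : X) : OnePoint X)) fun _ => ∞, ?_, ?_⟩
  · rw [← Nat.cofinite_eq_atTop, tendsto_cofinite_nhds_infty_iff]
    intro K _ hK
    refine (((hfin K hK).preimage Subtype.val_injective.injOn).image e).subset ?_
    intro n hn
    by_cases hne : ∃ a, e a = n
    · obtain ⟨a, rfl⟩ := hne
      rw [mem_preimage, he.extend_apply, coe_injective.mem_set_image] at hn
      exact ⟨a, ⟨a.2, hn⟩, rfl⟩
    · rw [mem_preimage, Function.extend_apply' _ _ _ hne] at hn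
      exact absurd hn infty_notMem_image_coe
  · rintro _ ⟨x, hx, rfl⟩
    exact ⟨e ⟨x, hx⟩, he.extend_apply _ _ _⟩

end OnePoint

section AlphaOnePoint

variable {X : Type*} [TopologicalSpace X] [T2Space X]

lemma isAlphaOnePoint_infty_of_isPIdeal
    (hP : IsPIdeal {A : Set X | A.Countable ∧ FiniteOnCompacts A}) :
    IsAlphaOnePoint (∞ : OnePoint X) := by
  intro σ hσ
  set B : ℕ → Set X := fun n => (↑) ⁻¹' range (σ n)
  have hB : ∀ n, (B n).Countable ∧ FiniteOnCompacts (B n) := fun n =>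
    ⟨(countable_range _).preimage coe_injective,
      finiteOnCompacts_preimage_range_of_tendsto (Nat.cofinite_eq_atTop ▸ hσ n)⟩
  obtain ⟨A, hA, hBA⟩ := hP.2.2.2 (range B) (range_subset_iff.mpr hB) (countable_range B)
  obtain ⟨τ, hτ, hAτ⟩ := exists_tendsto_infty_image_subset_range hA.1 hA.2
  refine ⟨τ, hτ, fun n => ?_⟩
  refine (((hBA (B n) (mem_range_self n)).image ((↑) : X → OnePoint X)).insert ∞).subset ?_
  rintro y ⟨hyσ, hyτ⟩
  induction y using OnePoint.rec with
  | infty => exact mem_insert _ _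
  | coe x => exact mem_insert_of_mem _ ⟨x, ⟨hyσ, fun hxA => hyτ (hAτ ⟨x, hxA, rfl⟩)⟩, rfl⟩

lemma isPIdeal_of_isAlphaOnePoint_infty (hα : IsAlphaOnePoint (∞ : OnePoint X)) :
    IsPIdeal {A : Set X | A.Countable ∧ FiniteOnCompacts A} := by
  refine ⟨fun A hA => hA.1, fun A hA B hBA => ⟨hA.1.mono hBA, hA.2.mono hBA⟩,
    fun A hA B hB => ⟨hA.1.union hB.1, hA.2.union hB.2⟩, fun Q hQP hQ => ?_⟩
  rcases Q.eq_empty_or_nonempty with rfl | hQne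
  · exact ⟨∅, ⟨countable_empty, finiteOnCompacts_empty⟩, by simp⟩
  obtain ⟨B, rfl⟩ := hQ.exists_eq_range hQne
  have hB : ∀ n, (B n).Countable ∧ FiniteOnCompacts (B n) := fun n => hQP (mem_range_self n)
  choose σ hσ hBσ using fun n => exists_tendsto_infty_image_subset_range (hB n).1 (hB n).2
  obtain ⟨τ, hτ, hστ⟩ := hα σ hσ
  refine ⟨(↑) ⁻¹' range τ, ⟨(countable_range τ).preimage coe_injective,
    finiteOnCompacts_preimage_range_of_tendsto (Nat.cofinite_eq_atTop ▸ hτ)⟩, ?_⟩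
  rintro _ ⟨n, rfl⟩
  refine Finite.of_finite_image ((hστ n).subset ?_) coe_injective.injOn
  rintro _ ⟨x, ⟨hxB, hxτ⟩, rfl⟩
  exact ⟨hBσ n ⟨x, hxB, rfl⟩, hxτ⟩

end AlphaOnePoint

/-- For a locally compact Hausdorff space `X`, the countable closed discrete subsets of
`X` form a P-ideal iff the point at infinity of the one-point compactification of `X`
is an α₁-point. -/
theorem pIdeal_iff_alpha1_at_infty {X : Type*} [TopologicalSpace X] [T2Space X]
    [LocallyCompactSpace X] :
    IsPIdeal {A : Set X | A.Countable ∧ IsClosed A ∧ DiscreteTopology A} ↔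
      IsAlphaOnePoint (OnePoint.infty : OnePoint X) := by
  simp only [isClosed_and_discreteTopology_iff_finiteOnCompacts]
  exact ⟨isAlphaOnePoint_infty_of_isPIdeal, isPIdeal_of_isAlphaOnePoint_infty⟩
end

section
/- If the bounding number satisfies 𝔟 > ℵ₂, then there exists an (ℵ₂, λ)-gap in (ω^ω, ≤*) for some regular uncountable cardinal λ. -/
open Set Cardinal

/-- `f ≤* g`: `f n ≤ g n` for all but finitely many `n`. -/
def LeStar (f g : ℕ → ℕ) : Prop := {n | g n < f n}.Finite

/-- The bounding number 𝔟: the least cardinality of a family in `ℕ → ℕ` that is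
unbounded with respect to eventual domination. -/
noncomputable def boundingNumber : Cardinal.{0} :=
  sInf {c | ∃ F : Set (ℕ → ℕ), #F = c ∧ ¬ ∃ g : ℕ → ℕ, ∀ f ∈ F, LeStar f g}

/-- `(f, g)` (indexed by the ordinals below `κ.ord`, `lam.ord`) is a `(κ, λ)`-pregap. -/
def IsPregap (κ lam : Cardinal.{0}) (f g : Ordinal → ℕ → ℕ) : Prop :=
  (∀ α < κ.ord, Monotone (f α)) ∧
  (∀ β < lam.ord, Monotone (g β)) ∧
  (∀ α₁ α₂ : Ordinal, α₁ ≤ α₂ → α₂ < κ.ord → LeStar (f α₁) (f α₂)) ∧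
  (∀ β₁ β₂ : Ordinal, β₁ ≤ β₂ → β₂ < lam.ord → LeStar (g β₂) (g β₁)) ∧
  (∀ α < κ.ord, ∀ β < lam.ord, LeStar (f α) (g β))

/-- A `(κ, λ)`-pregap is a gap if no `h` interpolates between the two sides. -/
def IsGap (κ lam : Cardinal.{0}) (f g : Ordinal → ℕ → ℕ) : Prop :=
  IsPregap κ lam f g ∧
    ¬ ∃ h : ℕ → ℕ, (∀ α < κ.ord, LeStar (f α) h) ∧ ∀ β < lam.ord, LeStar h (g β)

/-!
Since `κ < 𝔟`, every family of at most `κ` functions is `≤*`-bounded, so one can build a ladder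
`⟨f_α : α < κ⟩` of monotone functions with `f_γ + 1 ≤* f_α` for `γ < α`. Its upper bounds, taken
modulo finite changes, form a set `U` without minimal elements (`t ↦ t - 1`), and every countable
subset of `U` has a lower bound in `U`: a diagonal argument, which uses `κ < 𝔟` once more to bound
the thresholds from which each `f_α` lies below each member of the countable family. Choosing
strictly smaller elements of `U` as long as possible gives a decreasing sequence coinitial in `U`,
whose length is a limit ordinal; restricted to a cofinal sequence it has regular length, which is
uncountable because countable subsets of `U` are bounded below. Replacing each term `t` by the
monotone `k ↦ min_{j ≥ k} t j` yields the gap.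
-/

open Order Ordinal Filter

universe u

section Coinitial

variable {α : Type u} [Preorder α]

noncomputable def descendingSeq [Nonempty α] (U : Set α) (β : Ordinal.{u}) : α :=
  Classical.epsilon fun y => y ∈ U ∧ ∀ γ : Iio β, y < descendingSeq U γ
termination_by β
decreasing_by exact γ.2

theorem descendingSeq_spec [Nonempty α] {U : Set α} {β : Ordinal.{u}}
    (h : ∃ y ∈ U, ∀ γ < β, y < descendingSeq U γ) :
    descendingSeq U β ∈ U ∧ ∀ γ < β, descendingSeq U β < descendingSeq U γ := by
  obtain ⟨y, hy, hlt⟩ := h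
  rw [descendingSeq]
  have := Classical.epsilon_spec (p := fun y => y ∈ U ∧ ∀ γ : Iio β, y < descendingSeq U γ)
    ⟨y, hy, fun γ => hlt γ γ.2⟩
  exact ⟨this.1, fun γ hγ => this.2 ⟨γ, hγ⟩⟩

theorem exists_strictAntiOn_coinitial {U : Set α} (hne : U.Nonempty)
    (hmin : ∀ x ∈ U, ∃ y ∈ U, y < x) :
    ∃ o : Ordinal.{u}, IsSuccLimit o ∧ ∃ g : Ordinal.{u} → α,
      MapsTo g (Iio o) U ∧ StrictAntiOn g (Iio o) ∧ ∀ x ∈ U, ∃ γ < o, ¬ x ≤ g γ := by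
  have : Nonempty α := hne.to_subtype.map Subtype.val
  set g := descendingSeq U
  set Good : Ordinal.{u} → Prop := fun β => ∃ y ∈ U, ∀ γ < β, y < g γ
  -- otherwise `g` would be an injection of all ordinals into `α`
  have hbad : ∃ β, ¬ Good β := by
    by_contra! hgood
    refine not_injective_of_ordinal g fun β γ hβγ => ?_
    by_contra hβγ'
    rcases lt_or_gt_of_ne hβγ' with h | h
    · exact ((descendingSeq_spec (hgood γ)).2 β h).ne' hβγ
    · exact ((descendingSeq_spec (hgood β)).2 γ h).ne hβγ
  set o := sInf {β | ¬ Good β}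
  have ho : ¬ Good o := csInf_mem (s := {β | ¬ Good β}) hbad
  have hgood : ∀ β < o, Good β := fun β hβ => not_not.1 (notMem_of_lt_csInf' hβ)
  have hcoinit : ∀ x ∈ U, ∃ γ < o, ¬ x ≤ g γ := by
    intro x hx
    by_contra! hlow
    obtain ⟨y, hy, hyx⟩ := hmin x hx
    exact ho ⟨y, hy, fun γ hγ => hyx.trans_le (hlow γ hγ)⟩
  refine ⟨o, isSuccLimit_iff.2 ⟨?_, isSuccPrelimit_of_succ_lt fun β hβ => ?_⟩, g,
    fun β hβ => (descendingSeq_spec (hgood β hβ)).1,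
    fun β _ γ hγ hlt => (descendingSeq_spec (hgood γ hγ)).2 β hlt, hcoinit⟩
  · intro ho0
    obtain ⟨x, hx⟩ := hne
    obtain ⟨γ, hγ, -⟩ := hcoinit x hx
    exact not_lt_zero (ho0 ▸ hγ)
  · by_contra! hle
    have hβ' := descendingSeq_spec (hgood β hβ)
    obtain ⟨γ, hγ, hnot⟩ := hcoinit (g β) hβ'.1
    rcases (lt_succ_iff.1 (hγ.trans_le hle)).lt_or_eq with h | rfl
    · exact hnot (hβ'.2 γ h).le
    · exact hnot le_rfl

theorem exists_regular_antitoneOn_coinitial {U : Set α} (hne : U.Nonempty)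
    (hmin : ∀ x ∈ U, ∃ y ∈ U, y < x) (hω : ∀ s : ℕ → α, (∀ n, s n ∈ U) → ∃ x ∈ U, ∀ n, x ≤ s n) :
    ∃ lam : Cardinal.{u}, lam.IsRegular ∧ ℵ₀ < lam ∧ ∃ g : Ordinal.{u} → α,
      MapsTo g (Iio lam.ord) U ∧ AntitoneOn g (Iio lam.ord) ∧
        ∀ x ∈ U, ∃ ξ < lam.ord, ¬ x ≤ g ξ := by
  obtain ⟨o, hlim, g, hU, hanti, hcoinit⟩ := exists_strictAntiOn_coinitial hne hmin
  obtain ⟨c, hc⟩ := exists_isFundamentalSeq (o := o) rfl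
  classical
  set g' : Ordinal.{u} → α := fun ξ => if h : ξ < o.cof.ord then g (c ⟨ξ, h⟩) else g 0
  have hg' : ∀ ξ (h : ξ < o.cof.ord), g' ξ = g (c ⟨ξ, h⟩) := fun ξ h => dif_pos h
  have hcoinit' : ∀ x ∈ U, ∃ ξ < o.cof.ord, ¬ x ≤ g' ξ := by
    intro x hx
    by_contra! hlow
    obtain ⟨γ, hγ, hnot⟩ := hcoinit x hx
    obtain ⟨_, ⟨i, rfl⟩, hi⟩ := hc.isCofinal_range ⟨γ, hγ⟩
    exact hnot <| calc
      x ≤ g' i := hlow i i.2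
      _ = g (c i) := hg' i i.2
      _ ≤ g γ := hanti.antitoneOn hγ (c i).2 hi
  have haleph0 : ℵ₀ ≤ o.cof := aleph0_le_cof_iff.2 (one_lt_cof_iff.2 hlim)
  refine ⟨o.cof, isRegular_cof hlim, haleph0.lt_of_ne fun hcof => ?_, g',
    fun ξ hξ => hg' ξ hξ ▸ hU (c _).2, fun ξ₁ h₁ ξ₂ h₂ h => ?_, hcoinit'⟩
  · have hord : o.cof.ord = ω := by rw [← hcof, ord_aleph0]
    have hn : ∀ n : ℕ, (n : Ordinal) < o.cof.ord := fun n => hord ▸ natCast_lt_omega0 n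
    obtain ⟨x, hx, hlow⟩ := hω (fun n => g' n) fun n => hg' n (hn n) ▸ hU (c _).2
    obtain ⟨ξ, hξ, hnot⟩ := hcoinit' x hx
    obtain ⟨n, rfl⟩ := lt_omega0.1 (hord ▸ hξ)
    exact hnot (hlow n)
  · rw [hg' ξ₁ h₁, hg' ξ₂ h₂]
    exact hanti.antitoneOn (c _).2 (c _).2 (hc.strictMono.monotone h)

end Coinitial

theorem leStar_iff_eventuallyLE {f g : ℕ → ℕ} : LeStar f g ↔ f ≤ᶠ[atTop] g := by
  simp only [LeStar, EventuallyLE, ← Nat.cofinite_eq_atTop, eventually_cofinite, not_le]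

theorem exists_eventuallyLE_of_mk_lt_boundingNumber {F : Set (ℕ → ℕ)}
    (hF : #F < boundingNumber) : ∃ g : ℕ → ℕ, ∀ f ∈ F, f ≤ᶠ[atTop] g := by
  by_contra! h
  have hle : boundingNumber ≤ #F := csInf_le' ⟨F, rfl, by simpa [leStar_iff_eventuallyLE] using h⟩
  exact hle.not_gt hF

theorem mk_image_Iio_le_card {β : Type u} (f : Ordinal.{u} → β) (o : Ordinal.{u}) :
    #(f '' Iio o) ≤ o.card := by
  simpa [Cardinal.mk_Iio_ordinal, ← Ordinal.lift_card] using mk_image_le_lift (f := f) (s := Iio o)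

theorem exists_between_of_mk_lt_boundingNumber {F : Set (ℕ → ℕ)} (hF : #F < boundingNumber)
    (g : ℕ → ℕ → ℕ) (hFg : ∀ f ∈ F, ∀ n, f ≤ᶠ[atTop] g n) :
    ∃ h : ℕ → ℕ, (∀ f ∈ F, f ≤ᶠ[atTop] h) ∧ ∀ n, h ≤ᶠ[atTop] g n := by
  choose! N hN using fun f hf n => eventually_atTop.1 (hFg f hf n)
  obtain ⟨H, hH⟩ := exists_eventuallyLE_of_mk_lt_boundingNumber (mk_image_le.trans_lt hF)
  -- `h k` is the least `g n k` among the `n` whose bound `H n` on the thresholds `N f n` is `≤ k`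
  refine ⟨fun k => sInf ((fun n => g n k) '' {n | H n ≤ k}), fun f hf => ?_, fun n => ?_⟩
  · obtain ⟨M, hM⟩ := eventually_atTop.1 (hH _ (mem_image_of_mem N hf))
    have hsmall : ∀ᶠ k in atTop, ∀ m ∈ Iio M, N f m ≤ k :=
      (eventually_all_finite (finite_Iio M)).2 fun m _ => eventually_ge_atTop _
    filter_upwards [hsmall, eventually_ge_atTop (H 0)] with k hk h0
    refine le_csInf ⟨g 0 k, 0, h0, rfl⟩ ?_
    rintro _ ⟨m, hm, rfl⟩
    refine hN f hf m k ?_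
    rcases lt_or_ge m M with hm' | hm'
    · exact hk m hm'
    · exact (hM m hm').trans hm
  · filter_upwards [eventually_ge_atTop (H n)] with k hk
    exact Nat.sInf_le ⟨n, hk, rfl⟩

noncomputable def tailMin (t : ℕ → ℕ) (k : ℕ) : ℕ := sInf (t '' Ici k)

theorem tailMin_le (t : ℕ → ℕ) : tailMin t ≤ t := fun k => Nat.sInf_le ⟨k, self_mem_Ici, rfl⟩

theorem monotone_tailMin (t : ℕ → ℕ) : Monotone (tailMin t) := fun _ b hab =>
  csInf_le_csInf (OrderBot.bddBelow _) ⟨t b, b, self_mem_Ici, rfl⟩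
    (image_mono (Ici_subset_Ici.2 hab))

theorem eventuallyLE_tailMin {p t : ℕ → ℕ} (hp : Monotone p) (h : p ≤ᶠ[atTop] t) :
    p ≤ᶠ[atTop] tailMin t := by
  obtain ⟨N, hN⟩ := eventually_atTop.1 h
  filter_upwards [eventually_ge_atTop N] with k hk
  refine le_csInf ⟨t k, k, self_mem_Ici, rfl⟩ ?_
  rintro _ ⟨j, hj, rfl⟩
  exact (hp hj).trans (hN j (hk.trans hj))

noncomputable def ladder (α : Ordinal.{0}) : ℕ → ℕ :=
  Classical.epsilon fun g => Monotone g ∧ ∀ γ < α, ladder γ + 1 ≤ᶠ[atTop] g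
termination_by α

theorem ladder_spec {α : Ordinal.{0}} (hα : α.card < boundingNumber) :
    Monotone (ladder α) ∧ ∀ γ < α, ladder γ + 1 ≤ᶠ[atTop] ladder α := by
  obtain ⟨g, hg⟩ := exists_eventuallyLE_of_mk_lt_boundingNumber
    ((mk_image_Iio_le_card (fun γ => ladder γ + 1) α).trans_lt hα)
  rw [ladder]
  exact Classical.epsilon_spec (p := fun g => Monotone g ∧ ∀ γ < α, ladder γ + 1 ≤ᶠ[atTop] g)
    ⟨partialSups g, (partialSups g).monotone,
      fun γ hγ => (hg _ (mem_image_of_mem _ hγ)).trans (.of_forall (le_partialSups g))⟩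

theorem ladder_le_ladder {γ α : Ordinal.{0}} (hα : α.card < boundingNumber) (h : γ ≤ α) :
    ladder γ ≤ᶠ[atTop] ladder α := by
  rcases h.lt_or_eq with h | rfl
  · exact EventuallyLE.trans (.of_forall fun n => Nat.le_succ (ladder γ n)) ((ladder_spec hα).2 γ h)
  · exact EventuallyLE.refl _ _

theorem mk_image_ladder_lt {κ : Cardinal.{0}} (hκb : κ < boundingNumber) :
    #(ladder '' Iio κ.ord) < boundingNumber :=
  (mk_image_Iio_le_card ladder κ.ord).trans_lt (by rwa [card_ord])

/-- Upper bounds of the ladder in the germs at `atTop`, where `≤` is `≤*`. -/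
def ladderUpperBounds (κ : Cardinal.{0}) : Set ((atTop : Filter ℕ).Germ ℕ) :=
  {x | ∀ α < κ.ord, (ladder α : Germ atTop ℕ) ≤ x}

theorem ladderUpperBounds_nonempty {κ : Cardinal.{0}} (hκb : κ < boundingNumber) :
    (ladderUpperBounds κ).Nonempty := by
  obtain ⟨g, hg⟩ := exists_eventuallyLE_of_mk_lt_boundingNumber (mk_image_ladder_lt hκb)
  exact ⟨g, fun α hα => Germ.coe_le.2 (hg _ (mem_image_of_mem _ hα))⟩

theorem exists_lt_of_mem_ladderUpperBounds {κ : Cardinal.{0}} (hκ : ℵ₀ ≤ κ)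
    (hκb : κ ≤ boundingNumber) {x : (atTop : Filter ℕ).Germ ℕ} (hx : x ∈ ladderUpperBounds κ) :
    ∃ y ∈ ladderUpperBounds κ, y < x := by
  induction x using Germ.inductionOn with | h t => ?_
  have hsucc : ∀ α < κ.ord, ladder α + 1 ≤ᶠ[atTop] t := fun α hα =>
    have hα' := (isSuccLimit_ord hκ).succ_lt hα
    ((ladder_spec ((lt_ord.1 hα').trans_le hκb)).2 α (lt_succ α)).trans (Germ.coe_le.1 (hx _ hα'))
  refine ⟨↑(t - 1), fun α hα => Germ.coe_le.2 ((hsucc α hα).mono fun n hn => ?_), ?_⟩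
  · simp only [Pi.add_apply, Pi.sub_apply, Pi.one_apply] at hn ⊢
    omega
  · rw [lt_iff_le_not_ge, Germ.coe_le, Germ.coe_le]
    refine ⟨.of_forall fun n => Nat.sub_le _ _, fun hle => ?_⟩
    obtain ⟨n, hn, hpos⟩ := (hle.and (hsucc 0 (isSuccLimit_ord hκ).pos)).exists
    simp only [Pi.add_apply, Pi.sub_apply, Pi.one_apply] at hn hpos
    omega

theorem exists_le_of_forall_mem_ladderUpperBounds {κ : Cardinal.{0}} (hκb : κ < boundingNumber)
    (s : ℕ → (atTop : Filter ℕ).Germ ℕ) (hs : ∀ n, s n ∈ ladderUpperBounds κ) :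
    ∃ x ∈ ladderUpperBounds κ, ∀ n, x ≤ s n := by
  obtain ⟨g, rfl⟩ : ∃ g : ℕ → ℕ → ℕ, (fun n => (g n : Germ atTop ℕ)) = s :=
    ⟨_, funext fun n => Quotient.out_eq (s n)⟩
  obtain ⟨h, hFh, hhg⟩ := exists_between_of_mk_lt_boundingNumber (mk_image_ladder_lt hκb) g <| by
    rintro _ ⟨α, hα, rfl⟩ n
    exact Germ.coe_le.1 (hs n α hα)
  exact ⟨h, fun α hα => Germ.coe_le.2 (hFh _ (mem_image_of_mem _ hα)),
    fun n => Germ.coe_le.2 (hhg n)⟩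

theorem isGap_ladder_tailMin {κ lam : Cardinal.{0}} (hκb : κ ≤ boundingNumber)
    {G : Ordinal.{0} → ℕ → ℕ}
    (hGU : MapsTo (fun ξ => (G ξ : (atTop : Filter ℕ).Germ ℕ)) (Iio lam.ord) (ladderUpperBounds κ))
    (hGanti : AntitoneOn (fun ξ => (G ξ : (atTop : Filter ℕ).Germ ℕ)) (Iio lam.ord))
    (hGcoinit : ∀ x ∈ ladderUpperBounds κ, ∃ ξ < lam.ord, ¬ x ≤ (G ξ : (atTop : Filter ℕ).Germ ℕ)) :
    IsGap κ lam ladder fun ξ => tailMin (G ξ) := by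
  have hmono : ∀ α < κ.ord, Monotone (ladder α) :=
    fun α hα => (ladder_spec ((lt_ord.1 hα).trans_le hκb)).1
  simp only [IsGap, IsPregap, leStar_iff_eventuallyLE]
  refine ⟨⟨hmono, fun ξ _ => monotone_tailMin _,
    fun α₁ α₂ h h₂ => ladder_le_ladder ((lt_ord.1 h₂).trans_le hκb) h,
    fun ξ₁ ξ₂ h h₂ => eventuallyLE_tailMin (monotone_tailMin _)
      (EventuallyLE.trans (.of_forall (tailMin_le _))
        (Germ.coe_le.1 (hGanti (h.trans_lt h₂) h₂ h))),
    fun α hα ξ hξ => eventuallyLE_tailMin (hmono α hα) (Germ.coe_le.1 (hGU hξ α hα))⟩, ?_⟩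
  rintro ⟨h, hfh, hhg⟩
  obtain ⟨ξ, hξ, hnot⟩ := hGcoinit h fun α hα => Germ.coe_le.2 (hfh α hα)
  exact hnot (Germ.coe_le.2 ((hhg ξ hξ).trans (.of_forall (tailMin_le _))))

theorem exists_gap_of_lt_boundingNumber {κ : Cardinal.{0}} (hκ : ℵ₀ ≤ κ)
    (hκb : κ < boundingNumber) :
    ∃ lam : Cardinal.{0}, lam.IsRegular ∧ ℵ₀ < lam ∧ ∃ f g : Ordinal → ℕ → ℕ, IsGap κ lam f g := by
  obtain ⟨lam, hreg, hlam, G, hGU, hGanti, hGcoinit⟩ := exists_regular_antitoneOn_coinitial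
    (ladderUpperBounds_nonempty hκb) (fun _ => exists_lt_of_mem_ladderUpperBounds hκ hκb.le)
    (exists_le_of_forall_mem_ladderUpperBounds hκb)
  obtain ⟨G, rfl⟩ : ∃ G' : Ordinal → ℕ → ℕ, (fun ξ => (G' ξ : Germ atTop ℕ)) = G :=
    ⟨_, funext fun ξ => Quotient.out_eq (G ξ)⟩
  exact ⟨lam, hreg, hlam, ladder, _, isGap_ladder_tailMin hκb.le hGU hGanti hGcoinit⟩

/-- If `𝔟 > ℵ₂` then there is an `(ℵ₂, λ)`-gap for some regular uncountable `λ`. -/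
theorem exists_aleph2_gap_of_b_gt_aleph2 (hb : Cardinal.aleph 2 < boundingNumber) :
    ∃ lam : Cardinal.{0}, lam.IsRegular ∧ Cardinal.aleph0 < lam ∧
      ∃ f g : Ordinal → ℕ → ℕ, IsGap (Cardinal.aleph 2) lam f g :=
  exists_gap_of_lt_boundingNumber (aleph0_le_aleph 2) hb
end
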